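/- Every ordered rooted tree with n nodes admits a planar, order-preserving, strictly-upward, straight-line grid drawing of width at most n and height at most n in which the root is at the top-left corner, some root-to-leaf path is drawn on a single vertical line, and no subtree drawing uses that line's column except the path itself. -/

import Mathlib

/-- An ordered rooted tree: a root together with an ordered list of subtrees. -/
inductive OTree : Type
  | node : List OTree → OTree

mutual
  /-- Number of nodes of an ordered rooted tree. -/
  def OTree.size : OTree → ℕ
    | .node ts => 1 + OTree.sizeList ts
  def OTree.sizeList : List OTree → ℕ
    | [] => 0
    | t :: ts => OTree.size t + OTree.sizeList ts
end

mutual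
  /-- `subAt t a` is the subtree of `t` at address `a` (a list of child indices,
  read from the root), or `none` if there is no such node. -/
  def OTree.subAt : OTree → List ℕ → Option OTree
    | t, [] => some t
    | .node ts, i :: a => OTree.subAtList ts i a
  def OTree.subAtList : List OTree → ℕ → List ℕ → Option OTree
    | [], _, _ => none
    | t :: _, 0, a => OTree.subAt t a
    | _ :: ts, i + 1, a => OTree.subAtList ts i a
end

/-- `a` is the address of a node of `t`. -/
def OTree.isAddr (t : OTree) (a : List ℕ) : Prop := (t.subAt a).isSome

/-- `a` is the address of a leaf of `t`. -/
def OTree.isLeafAddr (t : OTree) (a : List ℕ) : Prop := t.subAt a = some (.node [])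

/-- Cast a grid point to the real plane. -/
def toPlane (q : ℤ × ℤ) : ℝ × ℝ := ((q.1 : ℝ), (q.2 : ℝ))

/-- The closed straight-line segment between two grid points, in the real plane. -/
def gridSegment (q r : ℤ × ℤ) : Set (ℝ × ℝ) := segment ℝ (toPlane q) (toPlane r)

/-- Cross product of two integer vectors. -/
def crossProd (u v : ℤ × ℤ) : ℤ := u.1 * v.2 - u.2 * v.1

/-!
Number the nodes in preorder and put the node with preorder index `p` and depth `d` at
`(p - d, -p)`. Every node then lies on the anti-diagonal `x + y = -d`, so each edge joins two
consecutive anti-diagonals, and a point of an edge determines both its anti-diagonal position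
and its parameter along the edge. Two edges between the same anti-diagonals cannot cross: the
subtree of a node occupies a contiguous block of the preorder, and the blocks of incomparable
nodes are disjoint, so the endpoints of the two edges are ordered alike at both ends. The nodes
with `x = 0` are those with `p = d`, which form the leftmost root-to-leaf path, and `d ≤ p < n`
gives the bounds on width and height.
-/

namespace OTree

mutual
  /-- Preorder index of the node at address `a`; junk for addresses that are not nodes of `t`. -/
  def preIndex : OTree → List ℕ → ℕ
    | _, [] => 0
    | .node ts, i :: a => 1 + preIndexList ts i a
  def preIndexList : List OTree → ℕ → List ℕ → ℕ
    | [], _, _ => 0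
    | t :: _, 0, a => preIndex t a
    | t :: ts, i + 1, a => t.size + preIndexList ts i a
end

theorem size_pos : ∀ t : OTree, 0 < t.size
  | .node ts => by simp [size]

theorem isAddr_iff {t : OTree} {a : List ℕ} : t.isAddr a ↔ ∃ s, t.subAt a = some s :=
  Option.isSome_iff_exists

mutual
theorem subAt_append : ∀ (t : OTree) (a b : List ℕ),
    t.subAt (a ++ b) = (t.subAt a).bind (·.subAt b)
  | _, [], _ => by simp [subAt]
  | .node ts, i :: a, b => subAtList_append ts i a b
theorem subAtList_append : ∀ (ts : List OTree) (i : ℕ) (a b : List ℕ),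
    subAtList ts i (a ++ b) = (subAtList ts i a).bind (·.subAt b)
  | [], _, _, _ => by simp [subAtList]
  | t :: _, 0, a, b => subAt_append t a b
  | _ :: ts, i + 1, a, b => subAtList_append ts i a b
end

mutual
theorem preIndex_append : ∀ (t : OTree) (a : List ℕ) {s : OTree},
    t.subAt a = some s → ∀ b, t.preIndex (a ++ b) = t.preIndex a + s.preIndex b
  | t, [], s, h, b => by
      simp only [subAt, Option.some.injEq] at h; subst h; simp [preIndex]
  | .node ts, i :: a, s, h, b => by
      simp only [List.cons_append, preIndex, preIndexList_append ts i a h b]; omega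
theorem preIndexList_append : ∀ (ts : List OTree) (i : ℕ) (a : List ℕ) {s : OTree},
    subAtList ts i a = some s → ∀ b,
      preIndexList ts i (a ++ b) = preIndexList ts i a + s.preIndex b
  | [], _, _, s, h, _ => nomatch h
  | t :: _, 0, a, s, h, b => preIndex_append t a h b
  | _ :: ts, i + 1, a, s, h, b => by
      simp only [preIndexList, preIndexList_append ts i a h b]; omega
end

mutual
theorem preIndex_add_size_le : ∀ (t : OTree) (a : List ℕ) {s : OTree},
    t.subAt a = some s → t.preIndex a + s.size ≤ t.size
  | t, [], s, h => by
      simp only [subAt, Option.some.injEq] at h; subst h; simp [preIndex]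
  | .node ts, i :: a, s, h => by
      have := preIndexList_add_size_le ts i a h
      simp only [preIndex, size]; omega
theorem preIndexList_add_size_le : ∀ (ts : List OTree) (i : ℕ) (a : List ℕ) {s : OTree},
    subAtList ts i a = some s → preIndexList ts i a + s.size ≤ sizeList ts
  | [], _, _, s, h => nomatch h
  | t :: ts, 0, a, s, h => by
      have := preIndex_add_size_le t a h
      simp only [preIndexList, sizeList]; omega
  | t :: ts, i + 1, a, s, h => by
      have := preIndexList_add_size_le ts i a h
      simp only [preIndexList, sizeList]; omega
end

mutual
theorem length_le_preIndex : ∀ (t : OTree) (a : List ℕ) {s : OTree},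
    t.subAt a = some s → a.length ≤ t.preIndex a
  | _, [], _, _ => by simp
  | .node ts, i :: a, s, h => by
      have := length_le_preIndexList ts i a h
      simp only [preIndex, List.length_cons]; omega
theorem length_le_preIndexList : ∀ (ts : List OTree) (i : ℕ) (a : List ℕ) {s : OTree},
    subAtList ts i a = some s → a.length ≤ preIndexList ts i a
  | [], _, _, s, h => nomatch h
  | t :: _, 0, a, s, h => length_le_preIndex t a h
  | _ :: ts, i + 1, a, s, h => by
      have := length_le_preIndexList ts i a h
      simp only [preIndexList]; omega
end

theorem preIndexList_add_size_le_of_lt : ∀ (ts : List OTree) (i : ℕ) (a : List ℕ) (j : ℕ)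
    (b : List ℕ) {s : OTree}, i < j → subAtList ts i a = some s →
      preIndexList ts i a + s.size ≤ preIndexList ts j b
  | [], _, _, _, _, s, _, h => nomatch h
  | t :: ts, 0, a, j + 1, b, s, _, h => by
      have := preIndex_add_size_le t a h
      simp only [preIndexList]; omega
  | t :: ts, i + 1, a, j + 1, b, s, hij, h => by
      have := preIndexList_add_size_le_of_lt ts i a j b (by omega) h
      simp only [preIndexList]; omega

mutual
/-- Node `a` owns the block `[preIndex a, preIndex a + size)` of the preorder. -/
theorem preIndex_blocks_disjoint : ∀ (t : OTree) (a b : List ℕ) {sa sb : OTree},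
    t.subAt a = some sa → t.subAt b = some sb → ¬ a <+: b → ¬ b <+: a →
    t.preIndex a + sa.size ≤ t.preIndex b ∨ t.preIndex b + sb.size ≤ t.preIndex a
  | _, [], _, _, _, _, _, hab, _ => absurd List.nil_prefix hab
  | _, _ :: _, [], _, _, _, _, _, hba => absurd List.nil_prefix hba
  | .node ts, i :: a, j :: b, sa, sb, ha, hb, hab, hba => by
      simp only [subAt] at ha hb
      simp only [preIndex]
      have := preIndexList_blocks_disjoint ts i a j b ha hb
        (fun hi h => hab (hi ▸ List.cons_prefix_cons.mpr ⟨rfl, h⟩))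
        (fun hi h => hba (hi ▸ List.cons_prefix_cons.mpr ⟨rfl, h⟩))
      omega
theorem preIndexList_blocks_disjoint : ∀ (ts : List OTree) (i : ℕ) (a : List ℕ) (j : ℕ)
    (b : List ℕ) {sa sb : OTree},
    subAtList ts i a = some sa → subAtList ts j b = some sb →
    (i = j → ¬ a <+: b) → (j = i → ¬ b <+: a) →
    preIndexList ts i a + sa.size ≤ preIndexList ts j b ∨
      preIndexList ts j b + sb.size ≤ preIndexList ts i a
  | [], _, _, _, _, _, _, ha, _, _, _ => nomatch ha
  | t :: _, 0, a, 0, b, _, _, ha, hb, hab, hba =>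
      preIndex_blocks_disjoint t a b ha hb (hab rfl) (hba rfl)
  | t :: ts, 0, a, j + 1, b, _, _, ha, _, _, _ =>
      .inl (preIndexList_add_size_le_of_lt (t :: ts) 0 a (j + 1) b (by omega) ha)
  | t :: ts, i + 1, a, 0, b, _, _, _, hb, _, _ =>
      .inr (preIndexList_add_size_le_of_lt (t :: ts) 0 b (i + 1) a (by omega) hb)
  | t :: ts, i + 1, a, j + 1, b, _, _, ha, hb, hab, hba => by
      simp only [preIndexList]
      have := preIndexList_blocks_disjoint ts i a j b ha hb
        (fun h => hab (by omega)) (fun h => hba (by omega))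
      omega
end

variable {t : OTree}

theorem exists_subAt_of_subAt_append {s : OTree} {a b : List ℕ}
    (h : t.subAt (a ++ b) = some s) : ∃ sa, t.subAt a = some sa ∧ sa.subAt b = some s := by
  rw [subAt_append] at h
  exact Option.bind_eq_some_iff.mp h

theorem isAddr_of_isAddr_append {a b : List ℕ} (h : t.isAddr (a ++ b)) :
    t.isAddr a := by
  obtain ⟨s, h⟩ := isAddr_iff.mp h
  obtain ⟨sa, ha, -⟩ := exists_subAt_of_subAt_append h
  exact isAddr_iff.mpr ⟨sa, ha⟩

theorem isAddr_of_prefix {a b : List ℕ} (hab : a <+: b) (hb : t.isAddr b) :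
    t.isAddr a := by
  obtain ⟨c, rfl⟩ := hab
  exact isAddr_of_isAddr_append hb

theorem preIndex_lt_preIndex_append {a c : List ℕ} {sa s : OTree} (ha : t.subAt a = some sa)
    (hc : sa.subAt c = some s) (hc0 : c ≠ []) : t.preIndex a < t.preIndex (a ++ c) := by
  have := length_le_preIndex sa c hc
  have := List.length_pos_iff.mpr hc0
  rw [preIndex_append t a ha]; omega

theorem preIndex_append_lt {a c : List ℕ} {sa s : OTree} (ha : t.subAt a = some sa)
    (hc : sa.subAt c = some s) : t.preIndex (a ++ c) < t.preIndex a + sa.size := by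
  have := preIndex_add_size_le sa c hc
  have := size_pos s
  rw [preIndex_append t a ha]; omega

theorem preIndex_injOn : Set.InjOn t.preIndex {a | t.isAddr a} := by
  intro a ha b hb hpre
  obtain ⟨sa, ha⟩ := isAddr_iff.mp ha
  obtain ⟨sb, hb⟩ := isAddr_iff.mp hb
  by_contra hne
  by_cases hab : a <+: b
  · obtain ⟨c, rfl⟩ := hab
    obtain ⟨sa', ha', hc⟩ := exists_subAt_of_subAt_append hb
    have := preIndex_lt_preIndex_append ha' hc (by rintro rfl; simp at hne)
    omega
  by_cases hba : b <+: a
  · obtain ⟨c, rfl⟩ := hba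
    obtain ⟨sb', hb', hc⟩ := exists_subAt_of_subAt_append ha
    have := preIndex_lt_preIndex_append hb' hc (by rintro rfl; simp at hne)
    omega
  have := size_pos sa
  have := size_pos sb
  have := preIndex_blocks_disjoint t a b ha hb hab hba
  omega

theorem preIndex_lt_preIndex_append_singleton {a : List ℕ} {i : ℕ} (h : t.isAddr (a ++ [i])) :
    t.preIndex a < t.preIndex (a ++ [i]) := by
  obtain ⟨s, h⟩ := isAddr_iff.mp h
  obtain ⟨sa, ha, hi⟩ := exists_subAt_of_subAt_append h
  exact preIndex_lt_preIndex_append ha hi (List.cons_ne_nil _ _)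

theorem preIndex_append_singleton_lt_of_lt {a : List ℕ} {i j : ℕ} (hij : i < j)
    (hi : t.isAddr (a ++ [i])) (hj : t.isAddr (a ++ [j])) :
    t.preIndex (a ++ [i]) < t.preIndex (a ++ [j]) := by
  obtain ⟨si, hi⟩ := isAddr_iff.mp hi
  obtain ⟨sj, hj⟩ := isAddr_iff.mp hj
  obtain ⟨⟨ts⟩, ha, hi⟩ := exists_subAt_of_subAt_append hi
  obtain ⟨sa, ha', hj⟩ := exists_subAt_of_subAt_append hj
  obtain rfl : sa = .node ts := Option.some_injective _ (ha'.symm.trans ha)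
  simp only [subAt] at hi hj
  have := preIndexList_add_size_le_of_lt ts i [] j [] hij hi
  have := size_pos si
  rw [preIndex_append t a ha, preIndex_append t a ha]
  simp only [preIndex]; omega

theorem preIndex_append_lt_of_length_eq {a b c : List ℕ} (hac : t.isAddr (a ++ c))
    (hb : t.isAddr b) (hlen : a.length = b.length) (hlt : t.preIndex a < t.preIndex b) :
    t.preIndex (a ++ c) < t.preIndex b := by
  obtain ⟨s, hac⟩ := isAddr_iff.mp hac
  obtain ⟨sb, hb⟩ := isAddr_iff.mp hb
  obtain ⟨sa, ha, hc⟩ := exists_subAt_of_subAt_append hac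
  have hne : a ≠ b := by rintro rfl; omega
  have := preIndex_append_lt ha hc
  have := size_pos sb
  have := preIndex_blocks_disjoint t a b ha hb (fun h => hne (h.eq_of_length hlen))
    (fun h => hne (h.eq_of_length hlen.symm).symm)
  omega

def leftPath : OTree → List ℕ
  | .node [] => []
  | .node (t :: _) => 0 :: leftPath t

theorem isLeafAddr_leftPath : ∀ t : OTree, t.isLeafAddr t.leftPath
  | .node [] => rfl
  | .node (t :: _) => isLeafAddr_leftPath t

theorem isAddr_leftPath (t : OTree) : t.isAddr t.leftPath := by
  rw [isAddr, isLeafAddr_leftPath t]; rfl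

theorem preIndex_eq_length_of_prefix_leftPath :
    ∀ (t : OTree) (a : List ℕ), a <+: t.leftPath → t.preIndex a = a.length
  | _, [], _ => by simp [preIndex]
  | .node [], _ :: _, h => by simp [leftPath] at h
  | .node (t :: _), i :: a, h => by
      obtain ⟨rfl, ha⟩ := List.cons_prefix_cons.mp h
      simp only [preIndex, preIndexList, preIndex_eq_length_of_prefix_leftPath t a ha,
        List.length_cons]
      omega

theorem prefix_leftPath_of_preIndex_eq_length : ∀ (t : OTree) (a : List ℕ) {s : OTree},
    t.subAt a = some s → t.preIndex a = a.length → a <+: t.leftPath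
  | _, [], _, _, _ => List.nil_prefix
  | .node [], _ :: _, _, h, _ => nomatch h
  | .node (t :: _), 0 :: a, _, h, hpre => by
      simp only [preIndex, preIndexList, List.length_cons] at hpre
      exact List.cons_prefix_cons.mpr
        ⟨rfl, prefix_leftPath_of_preIndex_eq_length t a h (by omega)⟩
  | .node (t :: ts), (i + 1) :: a, _, h, hpre => by
      have := length_le_preIndexList ts i a h
      have := size_pos t
      simp only [preIndex, preIndexList, List.length_cons] at hpre
      omega

end OTree

def layerPoint (d p : ℕ) : ℤ × ℤ := ((p : ℤ) - d, -(p : ℤ))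

section LayerSegments

variable {d e p p' q q' : ℕ} {x : ℝ × ℝ}

theorem crossProd_layerPoint_sub :
    crossProd (layerPoint (d + 1) p' - layerPoint d p) (layerPoint (d + 1) q' - layerPoint d p) =
      (q' : ℤ) - p' := by
  simp only [crossProd, layerPoint, Prod.fst_sub, Prod.snd_sub]
  push_cast; ring

theorem exists_of_mem_gridSegment_layerPoint
    (hx : x ∈ gridSegment (layerPoint d p) (layerPoint (d + 1) p')) :
    ∃ s : ℝ, 0 ≤ s ∧ s ≤ 1 ∧ x.1 + x.2 = -(d + s) ∧
      x.2 = -((1 - s) * p + s * p') := by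
  rw [gridSegment, segment_eq_image] at hx
  obtain ⟨s, ⟨hs0, hs1⟩, rfl⟩ := hx
  refine ⟨s, hs0, hs1, ?_, ?_⟩ <;> simp [toPlane, layerPoint] <;> ring

theorem eq_toPlane_layerPoint (h1 : x.1 + x.2 = -(e : ℝ)) (h2 : x.2 = -(q : ℝ)) :
    x = toPlane (layerPoint e q) := by
  ext <;> simp [toPlane, layerPoint] <;> linarith

theorem layerPoint_eq_of_toPlane_mem_gridSegment
    (h : toPlane (layerPoint e q) ∈ gridSegment (layerPoint d p) (layerPoint (d + 1) p')) :
    (e = d ∧ q = p) ∨ (e = d + 1 ∧ q = p') := by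
  obtain ⟨s, hs0, hs1, h1, h2⟩ := exists_of_mem_gridSegment_layerPoint h
  simp only [toPlane, layerPoint] at h1 h2
  push_cast at h1 h2
  have hs : s = (e : ℝ) - d := by linarith
  have hde : (d : ℝ) ≤ e := by linarith
  have hed : (e : ℝ) ≤ d + 1 := by linarith
  norm_cast at hde hed
  rcases (show e = d ∨ e = d + 1 by omega) with rfl | rfl
  · left; refine ⟨rfl, ?_⟩
    rw [hs, sub_self] at h2
    exact_mod_cast (by linarith : (q : ℝ) = p)
  · right; refine ⟨rfl, ?_⟩
    rw [hs] at h2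
    push_cast at h2
    exact_mod_cast (by linarith : (q : ℝ) = p')

theorem eq_of_mem_gridSegment_layerPoint_of_lt (hde : d < e)
    (hx : x ∈ gridSegment (layerPoint d p) (layerPoint (d + 1) p'))
    (hy : x ∈ gridSegment (layerPoint e q) (layerPoint (e + 1) q')) :
    x = toPlane (layerPoint (d + 1) p') ∧ p' = q := by
  obtain ⟨s, hs0, hs1, hx1, hx2⟩ := exists_of_mem_gridSegment_layerPoint hx
  obtain ⟨r, hr0, hr1, hy1, hy2⟩ := exists_of_mem_gridSegment_layerPoint hy
  have hde' : (d : ℝ) + 1 ≤ e := by exact_mod_cast hde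
  have hs : s = 1 := by linarith
  have hr : r = 0 := by linarith
  subst hs hr
  refine ⟨eq_toPlane_layerPoint (by push_cast; linarith) (by linarith), ?_⟩
  exact_mod_cast (by linarith : (p' : ℝ) = q)

theorem eq_of_mem_gridSegment_layerPoint_of_ne (hpq : p' ≠ q')
    (hx : x ∈ gridSegment (layerPoint d p) (layerPoint (d + 1) p'))
    (hy : x ∈ gridSegment (layerPoint d p) (layerPoint (d + 1) q')) :
    x = toPlane (layerPoint d p) := by
  obtain ⟨s, hs0, hs1, hx1, hx2⟩ := exists_of_mem_gridSegment_layerPoint hx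
  obtain ⟨r, hr0, hr1, hy1, hy2⟩ := exists_of_mem_gridSegment_layerPoint hy
  obtain rfl : s = r := by linarith
  have hs : s * ((p' : ℝ) - q') = 0 := by linear_combination hx2 - hy2
  obtain rfl : s = 0 := (mul_eq_zero.mp hs).resolve_right
    (sub_ne_zero.mpr (by exact_mod_cast hpq))
  exact eq_toPlane_layerPoint (by linarith) (by linarith)

theorem not_mem_gridSegment_layerPoint_of_lt (hpq : p < q) (hpq' : p' < q')
    (hx : x ∈ gridSegment (layerPoint d p) (layerPoint (d + 1) p')) :
    x ∉ gridSegment (layerPoint d q) (layerPoint (d + 1) q') := by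
  intro hy
  obtain ⟨s, hs0, hs1, hx1, hx2⟩ := exists_of_mem_gridSegment_layerPoint hx
  obtain ⟨r, hr0, hr1, hy1, hy2⟩ := exists_of_mem_gridSegment_layerPoint hy
  obtain rfl : s = r := by linarith
  have hpq : (p : ℝ) < q := by exact_mod_cast hpq
  have hpq' : (p' : ℝ) < q' := by exact_mod_cast hpq'
  nlinarith [mul_nonneg (sub_nonneg.mpr hs1) (sub_nonneg.mpr hpq.le),
    mul_nonneg hs0 (sub_nonneg.mpr hpq'.le)]

end LayerSegments

namespace OTree

def glrPos (t : OTree) (a : List ℕ) : ℤ × ℤ := layerPoint a.length (t.preIndex a)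

variable {t : OTree}

theorem glrPos_append_singleton (a : List ℕ) (i : ℕ) :
    t.glrPos (a ++ [i]) = layerPoint (a.length + 1) (t.preIndex (a ++ [i])) := by
  simp [glrPos]

theorem glrPos_injOn : Set.InjOn t.glrPos {a | t.isAddr a} := fun a ha b hb h =>
  preIndex_injOn ha hb (by simpa [glrPos, layerPoint] using congrArg Prod.snd h)

theorem glrPos_append_singleton_snd_lt {a : List ℕ} {i : ℕ} (h : t.isAddr (a ++ [i])) :
    (t.glrPos (a ++ [i])).2 < (t.glrPos a).2 := by
  simpa [glrPos, layerPoint] using preIndex_lt_preIndex_append_singleton h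

theorem crossProd_glrPos_pos {a : List ℕ} {i j : ℕ} (hij : i < j) (hi : t.isAddr (a ++ [i]))
    (hj : t.isAddr (a ++ [j])) :
    0 < crossProd (t.glrPos (a ++ [i]) - t.glrPos a) (t.glrPos (a ++ [j]) - t.glrPos a) := by
  rw [glrPos_append_singleton, glrPos_append_singleton, glrPos, crossProd_layerPoint_sub]
  have := preIndex_append_singleton_lt_of_lt hij hi hj
  omega

theorem glrPos_edges_meet_of_length_lt {a b : List ℕ} {i j : ℕ} (hi : t.isAddr (a ++ [i]))
    (hj : t.isAddr (b ++ [j])) (hlen : a.length < b.length) {x : ℝ × ℝ}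
    (hxi : x ∈ gridSegment (t.glrPos a) (t.glrPos (a ++ [i])))
    (hxj : x ∈ gridSegment (t.glrPos b) (t.glrPos (b ++ [j]))) :
    a ++ [i] = b ∧ x = toPlane (t.glrPos (a ++ [i])) := by
  rw [glrPos_append_singleton] at hxi hxj ⊢
  obtain ⟨hx, hpre⟩ := eq_of_mem_gridSegment_layerPoint_of_lt hlen hxi hxj
  exact ⟨preIndex_injOn hi (isAddr_of_isAddr_append hj) hpre, hx⟩

theorem glrPos_edges_disjoint_of_length_eq {a b : List ℕ} {i j : ℕ} (hi : t.isAddr (a ++ [i]))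
    (hj : t.isAddr (b ++ [j])) (hlen : a.length = b.length) (hab : a ≠ b) {x : ℝ × ℝ}
    (hxi : x ∈ gridSegment (t.glrPos a) (t.glrPos (a ++ [i])))
    (hxj : x ∈ gridSegment (t.glrPos b) (t.glrPos (b ++ [j]))) : False := by
  have hne : t.preIndex a ≠ t.preIndex b := fun h =>
    hab (preIndex_injOn (isAddr_of_isAddr_append hi) (isAddr_of_isAddr_append hj) h)
  wlog hlt : t.preIndex a < t.preIndex b generalizing a b i j
  · exact this hj hi hlen.symm (Ne.symm hab) hxj hxi hne.symm (by omega)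
  rw [glrPos_append_singleton, glrPos, hlen] at hxi
  rw [glrPos_append_singleton] at hxj
  have hend := (preIndex_append_lt_of_length_eq hi (isAddr_of_isAddr_append hj) hlen hlt).trans
    (preIndex_lt_preIndex_append_singleton hj)
  exact not_mem_gridSegment_layerPoint_of_lt hlt hend hxi hxj

theorem glrPos_edges_meet_at_common_endpoint {a b : List ℕ} {i j : ℕ}
    (hi : t.isAddr (a ++ [i])) (hj : t.isAddr (b ++ [j])) (hne : (a, i) ≠ (b, j)) {x : ℝ × ℝ}
    (hx : x ∈ gridSegment (t.glrPos a) (t.glrPos (a ++ [i])) ∩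
      gridSegment (t.glrPos b) (t.glrPos (b ++ [j]))) :
    ∃ c, (c = a ∨ c = a ++ [i]) ∧ (c = b ∨ c = b ++ [j]) ∧ x = toPlane (t.glrPos c) := by
  obtain ⟨hxi, hxj⟩ := hx
  rcases lt_trichotomy a.length b.length with hlen | hlen | hlen
  · obtain ⟨rfl, hx⟩ := glrPos_edges_meet_of_length_lt hi hj hlen hxi hxj
    exact ⟨a ++ [i], .inr rfl, .inl rfl, hx⟩
  · obtain rfl : a = b := by
      by_contra hab
      exact glrPos_edges_disjoint_of_length_eq hi hj hlen hab hxi hxj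
    have hpre : t.preIndex (a ++ [i]) ≠ t.preIndex (a ++ [j]) := fun h =>
      hne (by simpa using preIndex_injOn hi hj h)
    rw [glrPos_append_singleton] at hxi hxj
    exact ⟨a, .inl rfl, .inl rfl, eq_of_mem_gridSegment_layerPoint_of_ne hpre hxi hxj⟩
  · obtain ⟨rfl, hx⟩ := glrPos_edges_meet_of_length_lt hj hi hlen hxj hxi
    exact ⟨b ++ [j], .inl rfl, .inr rfl, hx⟩

theorem toPlane_glrPos_not_mem_edge {a c : List ℕ} {i : ℕ} (hi : t.isAddr (a ++ [i]))
    (hc : t.isAddr c) (hca : c ≠ a) (hci : c ≠ a ++ [i]) :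
    toPlane (t.glrPos c) ∉ gridSegment (t.glrPos a) (t.glrPos (a ++ [i])) := by
  rw [glrPos_append_singleton, glrPos, glrPos]
  intro h
  rcases layerPoint_eq_of_toPlane_mem_gridSegment h with ⟨-, h⟩ | ⟨-, h⟩
  · exact hca (preIndex_injOn hc (isAddr_of_isAddr_append hi) h)
  · exact hci (preIndex_injOn hc hi h)

theorem glrPos_fst_mem_Ico {a : List ℕ} (ha : t.isAddr a) :
    (t.glrPos a).1 ∈ Set.Ico 0 (t.size : ℤ) := by
  obtain ⟨s, ha⟩ := isAddr_iff.mp ha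
  have := length_le_preIndex t a ha
  have := preIndex_add_size_le t a ha
  have := size_pos s
  simp only [glrPos, layerPoint, Set.mem_Ico]; omega

theorem glrPos_snd_mem_Ioc {a : List ℕ} (ha : t.isAddr a) :
    (t.glrPos a).2 ∈ Set.Ioc (-(t.size : ℤ)) 0 := by
  obtain ⟨s, ha⟩ := isAddr_iff.mp ha
  have := preIndex_add_size_le t a ha
  have := size_pos s
  simp only [glrPos, layerPoint, Set.mem_Ioc]; omega

theorem glrPos_nil : t.glrPos [] = 0 := by
  simp [glrPos, layerPoint, preIndex]

theorem glrPos_fst_eq_zero_iff {a : List ℕ} (ha : t.isAddr a) :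
    (t.glrPos a).1 = 0 ↔ a <+: t.leftPath := by
  obtain ⟨s, ha⟩ := isAddr_iff.mp ha
  have := length_le_preIndex t a ha
  simp only [glrPos, layerPoint]
  constructor
  · exact fun h => prefix_leftPath_of_preIndex_eq_length t a ha (by omega)
  · intro h; rw [preIndex_eq_length_of_prefix_leftPath t a h]; omega

end OTree

open OTree

theorem exists_quadratic_GLR_drawing (t : OTree) (n : ℕ) (hsize : t.size = n) :
    ∃ pos : List ℕ → ℤ × ℤ,
      -- distinct nodes occupy distinct grid points
      (∀ a b : List ℕ, t.isAddr a → t.isAddr b → pos a = pos b → a = b) ∧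
      -- strictly upward: every child is strictly below its parent
      (∀ (a : List ℕ) (i : ℕ), t.isAddr (a ++ [i]) →
        (pos (a ++ [i])).2 < (pos a).2) ∧
      -- order-preserving: children of a node appear in left-to-right angular order
      (∀ (a : List ℕ) (i j : ℕ), i < j → t.isAddr (a ++ [i]) → t.isAddr (a ++ [j]) →
        0 < crossProd (pos (a ++ [i]) - pos a) (pos (a ++ [j]) - pos a)) ∧
      -- planar, straight-line: two distinct edges meet only in common endpoints
      (∀ (a : List ℕ) (i : ℕ) (b : List ℕ) (j : ℕ),
        t.isAddr (a ++ [i]) → t.isAddr (b ++ [j]) → (a, i) ≠ (b, j) →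
        ∀ x ∈ gridSegment (pos a) (pos (a ++ [i])) ∩ gridSegment (pos b) (pos (b ++ [j])),
          ∃ c : List ℕ, (c = a ∨ c = a ++ [i]) ∧ (c = b ∨ c = b ++ [j]) ∧
            x = toPlane (pos c)) ∧
      -- planar: no node lies on an edge it is not an endpoint of
      (∀ (a : List ℕ) (i : ℕ) (c : List ℕ), t.isAddr (a ++ [i]) → t.isAddr c →
        c ≠ a → c ≠ a ++ [i] → toPlane (pos c) ∉ gridSegment (pos a) (pos (a ++ [i]))) ∧
      -- width at most n
      (∃ x0 : ℤ, ∀ a : List ℕ, t.isAddr a → x0 ≤ (pos a).1 ∧ (pos a).1 < x0 + n) ∧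
      -- height at most n
      (∃ y0 : ℤ, ∀ a : List ℕ, t.isAddr a → y0 ≤ (pos a).2 ∧ (pos a).2 < y0 + n) ∧
      -- the root is at the top-left corner
      (∀ a : List ℕ, t.isAddr a →
        (pos ([] : List ℕ)).1 ≤ (pos a).1 ∧ (pos a).2 ≤ (pos ([] : List ℕ)).2) ∧
      -- some root-to-leaf path is drawn on a single vertical line, and no other
      -- node uses that column
      (∃ ℓ : List ℕ, t.isLeafAddr ℓ ∧
        (∀ a : List ℕ, a <+: ℓ → (pos a).1 = (pos ([] : List ℕ)).1) ∧
        (∀ a : List ℕ, t.isAddr a → ¬ a <+: ℓ →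
          (pos a).1 ≠ (pos ([] : List ℕ)).1)) := by
  subst hsize
  refine ⟨t.glrPos, fun a b ha hb h => glrPos_injOn ha hb h,
    fun a i h => glrPos_append_singleton_snd_lt h,
    fun a i j hij hi hj => crossProd_glrPos_pos hij hi hj,
    fun a i b j hi hj hne x hx => glrPos_edges_meet_at_common_endpoint hi hj hne hx,
    fun a i c hi hc => toPlane_glrPos_not_mem_edge hi hc,
    ⟨0, fun a ha => by simpa using glrPos_fst_mem_Ico ha⟩,
    ⟨1 - t.size, fun a ha => by have := glrPos_snd_mem_Ioc ha; grind⟩,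
    fun a ha => ?_, t.leftPath, isLeafAddr_leftPath t, fun a h => ?_, fun a ha h => ?_⟩
  · simpa [glrPos_nil] using ⟨(glrPos_fst_mem_Ico ha).1, (glrPos_snd_mem_Ioc ha).2⟩
  · have ha := isAddr_of_prefix h (isAddr_leftPath t)
    simpa [glrPos_nil] using (glrPos_fst_eq_zero_iff ha).mpr h
  · simpa [glrPos_nil] using mt (glrPos_fst_eq_zero_iff ha).mp h
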